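/- For $a > 0$ and dimension $d \geq 1$, let $G = \{z \in \mathbb{R}^d : |z^{(i)}| < a \text{ for all } i \geq 2\}$. Let $f: G \to [0,U]$ be Lebesgue measurable with $\int_G f(x)\,dx = E \in (0,\infty)$. Then for any $b \in \mathbb{R}$, $\int_G (x^{(1)} - b)^2 f(x)\,dx \geq \frac{E^3}{12 U^2 (2a)^{2(d-1)}}$, with equality if and only if $f = U \mathbf{1}_{G_1}$ a.e. on $G$, where $G_1 = [b - \frac{E}{2U(2a)^{d-1}}, b + \frac{E}{2U(2a)^{d-1}}] \times (-a,a)^{d-1}$. -/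

import Mathlib

/-!
Let `g = U · 1{|x₁ - b| ≤ r}` on `G`, with `r` chosen so that `g` has the same mass `E` as `f`.
Since `0 ≤ f ≤ U`, the bathtub inequality `((x₁ - b)² - r²) (f - g) ≥ 0` holds pointwise on `G`;
integrating it gives `∫ (x₁ - b)² f - ∫ (x₁ - b)² g ≥ r² (∫ f - ∫ g) = 0`, and equality forces
`f = g` off the null set `{|x₁ - b| = r}`. Both integrals of `g` split by Fubini into a
one-dimensional integral in `x₁` times the volume `(2a)^(d-1)` of the cross-section.
-/

open MeasureTheory Set ENNReal

section Bathtub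

variable {α : Type*} [MeasurableSpace α] {μ : Measure α}

-- Written without subtraction so that it can be integrated in `ℝ≥0∞`.
lemma ofReal_mul_add_le_of_nonneg_sub_mul_sub {p c u v : ℝ} (hp : 0 ≤ p) (hc : 0 ≤ c)
    (hu : 0 ≤ u) (hv : 0 ≤ v) (h : 0 ≤ (p - c) * (u - v)) :
    ENNReal.ofReal (p * v) + ENNReal.ofReal c * ENNReal.ofReal u ≤
      ENNReal.ofReal (p * u) + ENNReal.ofReal c * ENNReal.ofReal v := by
  rw [← ENNReal.ofReal_mul hc, ← ENNReal.ofReal_mul hc,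
    ← ENNReal.ofReal_add (by positivity) (by positivity),
    ← ENNReal.ofReal_add (by positivity) (by positivity)]
  exact ENNReal.ofReal_le_ofReal (by linarith)

lemma eq_of_ofReal_mul_add_eq {p c u v : ℝ} (hp : 0 ≤ p) (hc : 0 ≤ c)
    (hu : 0 ≤ u) (hv : 0 ≤ v) (hpc : p ≠ c)
    (h : ENNReal.ofReal (p * v) + ENNReal.ofReal c * ENNReal.ofReal u =
      ENNReal.ofReal (p * u) + ENNReal.ofReal c * ENNReal.ofReal v) : u = v := by
  rw [← ENNReal.ofReal_mul hc, ← ENNReal.ofReal_mul hc,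
    ← ENNReal.ofReal_add (by positivity) (by positivity),
    ← ENNReal.ofReal_add (by positivity) (by positivity),
    ENNReal.ofReal_eq_ofReal_iff (by positivity) (by positivity)] at h
  have : (p - c) * (u - v) = 0 := by linear_combination -h
  linarith [(mul_eq_zero.mp this).resolve_left (sub_ne_zero.mpr hpc)]

variable {φ f g : α → ℝ} {c : ℝ}
  (hφ : ∀ᵐ x ∂μ, 0 ≤ φ x) (hc : 0 ≤ c) (hf : ∀ᵐ x ∂μ, 0 ≤ f x) (hg : ∀ᵐ x ∂μ, 0 ≤ g x)
  (hfg : ∀ᵐ x ∂μ, 0 ≤ (φ x - c) * (f x - g x))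
include hφ hc hf hg hfg

lemma lintegral_ofReal_mul_le_of_nonneg_sub_mul_sub (hφm : Measurable φ) (hgm : Measurable g)
    (hmass : ∫⁻ x, ENNReal.ofReal (f x) ∂μ = ∫⁻ x, ENNReal.ofReal (g x) ∂μ)
    (hfin : ∫⁻ x, ENNReal.ofReal (g x) ∂μ ≠ ∞) :
    ∫⁻ x, ENNReal.ofReal (φ x * g x) ∂μ ≤ ∫⁻ x, ENNReal.ofReal (φ x * f x) ∂μ := by
  have key := lintegral_mono_ae <| by
    filter_upwards [hφ, hf, hg, hfg] with x hφx hfx hgx h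
    exact ofReal_mul_add_le_of_nonneg_sub_mul_sub hφx hc hfx hgx h
  rw [lintegral_add_left (by fun_prop), lintegral_add_right _
    (hgm.ennreal_ofReal.const_mul _), lintegral_const_mul' _ _ ofReal_ne_top,
    lintegral_const_mul' _ _ ofReal_ne_top, hmass] at key
  exact (ENNReal.add_le_add_iff_right (mul_ne_top ofReal_ne_top hfin)).mp key

lemma ae_eq_of_lintegral_ofReal_mul_eq (hφm : Measurable φ) (hfm : Measurable f)
    (hgm : Measurable g) (hφc : ∀ᵐ x ∂μ, φ x ≠ c)
    (hmass : ∫⁻ x, ENNReal.ofReal (f x) ∂μ = ∫⁻ x, ENNReal.ofReal (g x) ∂μ)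
    (hfin : ∫⁻ x, ENNReal.ofReal (g x) ∂μ ≠ ∞)
    (hφg_fin : ∫⁻ x, ENNReal.ofReal (φ x * g x) ∂μ ≠ ∞)
    (heq : ∫⁻ x, ENNReal.ofReal (φ x * f x) ∂μ = ∫⁻ x, ENNReal.ofReal (φ x * g x) ∂μ) :
    f =ᵐ[μ] g := by
  let A := fun x => ENNReal.ofReal (φ x * g x) + ENNReal.ofReal c * ENNReal.ofReal (f x)
  let B := fun x => ENNReal.ofReal (φ x * f x) + ENNReal.ofReal c * ENNReal.ofReal (g x)
  have hAB : A ≤ᵐ[μ] B := by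
    filter_upwards [hφ, hf, hg, hfg] with x hφx hfx hgx h
    exact ofReal_mul_add_le_of_nonneg_sub_mul_sub hφx hc hfx hgx h
  have hA : ∫⁻ x, A x ∂μ = ∫⁻ x, ENNReal.ofReal (φ x * g x) ∂μ +
      ENNReal.ofReal c * ∫⁻ x, ENNReal.ofReal (g x) ∂μ := by
    rw [lintegral_add_left (by fun_prop), lintegral_const_mul' _ _ ofReal_ne_top, hmass]
  have hB : ∫⁻ x, B x ∂μ = ∫⁻ x, A x ∂μ := by
    rw [hA, lintegral_add_left (by fun_prop), lintegral_const_mul' _ _ ofReal_ne_top, heq]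
  have hAB_ae := ae_eq_of_ae_le_of_lintegral_le hAB
    (by rw [hA]; exact add_ne_top.mpr ⟨hφg_fin, mul_ne_top ofReal_ne_top hfin⟩) (by fun_prop) hB.le
  filter_upwards [hAB_ae, hφ, hf, hg, hφc] with x h hφx hfx hgx hφcx
  exact eq_of_ofReal_mul_add_eq hφx hc hfx hgx hφcx h

end Bathtub

section Interval

variable (b : ℝ)

lemma ae_sq_sub_ne_sq (r : ℝ) : ∀ᵐ t : ℝ, (t - b) ^ 2 ≠ r ^ 2 := by
  refine measure_mono_null (fun t ht => ?_) ((toFinite {b - r, b + r}).measure_zero volume)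
  have : t = b - r ∨ t = b + r := by
    rcases sq_eq_sq_iff_eq_or_eq_neg.mp (not_not.mp ht) with h | h
    exacts [Or.inr (by linarith), Or.inl (by linarith)]
  simpa using this

variable {r : ℝ} (hr : 0 ≤ r) (U : ℝ)
include hr

lemma lintegral_sq_sub_Icc :
    ∫⁻ t in Icc (b - r) (b + r), ENNReal.ofReal ((t - b) ^ 2) = ENNReal.ofReal (2 / 3 * r ^ 3) := by
  rw [← ofReal_integral_eq_lintegral_ofReal (Continuous.integrableOn_Icc (by fun_prop))
    (ae_of_all _ fun t => sq_nonneg _), integral_Icc_eq_integral_Ioc,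
    ← intervalIntegral.integral_of_le (by linarith),
    intervalIntegral.integral_comp_sub_right (fun t => t ^ 2) b, integral_pow]
  ring_nf

lemma lintegral_ofReal_indicator_Icc :
    ∫⁻ t, ENNReal.ofReal ((Icc (b - r) (b + r)).indicator (fun _ => U) t) =
      ENNReal.ofReal (2 * r * U) := by
  rw [← Function.comp_def ENNReal.ofReal, ← indicator_comp_of_zero ofReal_zero,
    Function.comp_def, lintegral_indicator_const measurableSet_Icc, Real.volume_Icc,
    ENNReal.ofReal_mul (by linarith), mul_comm]
  ring_nf

lemma lintegral_sq_sub_mul_indicator_Icc :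
    ∫⁻ t, ENNReal.ofReal ((t - b) ^ 2 * (Icc (b - r) (b + r)).indicator (fun _ => U) t) =
      ENNReal.ofReal (2 / 3 * r ^ 3 * U) := by
  have hpt : ∀ t, ENNReal.ofReal ((t - b) ^ 2 * (Icc (b - r) (b + r)).indicator (fun _ => U) t) =
      (Icc (b - r) (b + r)).indicator
        (fun t => ENNReal.ofReal ((t - b) ^ 2) * ENNReal.ofReal U) t :=
    fun t => by
      by_cases ht : t ∈ Icc (b - r) (b + r) <;> simp [ht, ENNReal.ofReal_mul (sq_nonneg (t - b))]
  rw [lintegral_congr hpt, lintegral_indicator measurableSet_Icc,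
    lintegral_mul_const _ (by fun_prop), lintegral_sq_sub_Icc b hr,
    ← ENNReal.ofReal_mul (by positivity)]

lemma sq_sub_sq_mul_sub_indicator_Icc_nonneg {t u : ℝ} (hu : 0 ≤ u) (huU : u ≤ U) :
    0 ≤ ((t - b) ^ 2 - r ^ 2) * (u - (Icc (b - r) (b + r)).indicator (fun _ => U) t) := by
  by_cases ht : t ∈ Icc (b - r) (b + r)
  · rw [indicator_of_mem ht]
    have : (t - b) ^ 2 ≤ r ^ 2 := by nlinarith [ht.1, ht.2]
    exact mul_nonneg_of_nonpos_of_nonpos (by linarith) (by linarith)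
  · rw [indicator_of_notMem ht, sub_zero]
    have : r ^ 2 ≤ (t - b) ^ 2 := by
      rcases not_and_or.mp ht with h | h <;> nlinarith [not_le.mp h]
    exact mul_nonneg (by linarith) hu

end Interval

section Slab

variable {n : ℕ} (k : Fin (n + 1))

lemma measurePreserving_apply_succAbove :
    MeasurePreserving (fun x : EuclideanSpace ℝ (Fin (n + 1)) => (x k, fun j => x (k.succAbove j)))
      volume volume :=
  (volume_preserving_piFinSuccAbove (fun _ => ℝ) k).comp
    (EuclideanSpace.volume_preserving_symm_measurableEquiv_toLp _)

lemma map_restrict_preimage_succAbove {S : Set (Fin n → ℝ)} (hS : MeasurableSet S) :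
    (volume.restrict {x : EuclideanSpace ℝ (Fin (n + 1)) | (fun j => x (k.succAbove j)) ∈ S}).map
      (fun x => x k) = volume S • volume := by
  have he := measurePreserving_apply_succAbove k
  have hk : Measurable fun x : EuclideanSpace ℝ (Fin (n + 1)) => x k :=
    measurable_fst.comp he.measurable
  ext s hs
  rw [Measure.map_apply hk hs, Measure.restrict_apply (hk hs), Measure.smul_apply, smul_eq_mul,
    show (fun x : EuclideanSpace ℝ (Fin (n + 1)) => x k) ⁻¹' s ∩
        {x | (fun j => x (k.succAbove j)) ∈ S} =
      (fun x => (x k, fun j => x (k.succAbove j))) ⁻¹' s ×ˢ S from rfl,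
    he.measure_preimage (hs.prod hS).nullMeasurableSet, Measure.volume_eq_prod,
    Measure.prod_prod, mul_comm]

variable (a : ℝ)

def slab : Set (EuclideanSpace ℝ (Fin (n + 1))) := {z | ∀ i, i ≠ k → |z i| < a}

lemma slab_eq_preimage_succAbove :
    slab k a = {z | (fun j => z (k.succAbove j)) ∈ univ.pi fun _ => Ioo (-a) a} := by
  ext z
  simp [slab, Fin.forall_iff_succAbove k, Fin.succAbove_ne, abs_lt]

lemma measurableSet_slab : MeasurableSet (slab k a) := by
  rw [slab_eq_preimage_succAbove]
  exact measurable_snd.comp (measurePreserving_apply_succAbove k).measurable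
    (MeasurableSet.univ_pi fun _ => measurableSet_Ioo)

lemma map_restrict_slab :
    (volume.restrict (slab k a)).map (fun x => x k) = ENNReal.ofReal (2 * a) ^ n • volume := by
  rw [slab_eq_preimage_succAbove, map_restrict_preimage_succAbove k
    (MeasurableSet.univ_pi fun _ => measurableSet_Ioo), volume_pi_pi]
  simp [Real.volume_Ioo, two_mul]

lemma setLIntegral_slab_comp_apply {F : ℝ → ℝ≥0∞} (hF : Measurable F) :
    ∫⁻ x in slab k a, F (x k) = ENNReal.ofReal (2 * a) ^ n * ∫⁻ t, F t := by
  rw [← lintegral_map hF (by fun_prop), map_restrict_slab, lintegral_smul_measure, smul_eq_mul]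

lemma ae_restrict_slab_of_ae {P : ℝ → Prop} (hP : ∀ᵐ t, P t) :
    ∀ᵐ x ∂volume.restrict (slab k a), P (x k) :=
  ae_of_ae_map (by fun_prop) (by rw [map_restrict_slab]; exact Measure.ae_smul_measure hP _)

end Slab

section SlabBathtub

variable {n : ℕ} (k : Fin (n + 1)) {a : ℝ} (b : ℝ) {r U : ℝ} (hr : 0 ≤ r)
include hr

lemma setLIntegral_slab_indicator_Icc :
    ∫⁻ x in slab k a, ENNReal.ofReal ((Icc (b - r) (b + r)).indicator (fun _ => U) (x k)) =
      ENNReal.ofReal (2 * a) ^ n * ENNReal.ofReal (2 * r * U) := by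
  rw [setLIntegral_slab_comp_apply k a
    (measurable_const.indicator measurableSet_Icc).ennreal_ofReal,
    lintegral_ofReal_indicator_Icc b hr]

lemma setLIntegral_slab_sq_sub_mul_indicator_Icc :
    ∫⁻ x in slab k a,
        ENNReal.ofReal ((x k - b) ^ 2 * (Icc (b - r) (b + r)).indicator (fun _ => U) (x k)) =
      ENNReal.ofReal (2 * a) ^ n * ENNReal.ofReal (2 / 3 * r ^ 3 * U) := by
  rw [setLIntegral_slab_comp_apply k a (F := fun t =>
      ENNReal.ofReal ((t - b) ^ 2 * (Icc (b - r) (b + r)).indicator (fun _ => U) t))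
    (by fun_prop (disch := exact measurableSet_Icc)), lintegral_sq_sub_mul_indicator_Icc b hr]

theorem setLIntegral_slab_sq_sub_mul_bathtub (hU : 0 ≤ U) {f : EuclideanSpace ℝ (Fin (n + 1)) → ℝ}
    (hf : Measurable f) (hf0 : ∀ x ∈ slab k a, 0 ≤ f x) (hfU : ∀ x ∈ slab k a, f x ≤ U)
    (hmass : ∫⁻ x in slab k a, ENNReal.ofReal (f x) =
      ENNReal.ofReal (2 * a) ^ n * ENNReal.ofReal (2 * r * U)) :
    ∫⁻ x in slab k a,
        ENNReal.ofReal ((x k - b) ^ 2 * (Icc (b - r) (b + r)).indicator (fun _ => U) (x k)) ≤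
      ∫⁻ x in slab k a, ENNReal.ofReal ((x k - b) ^ 2 * f x) ∧
    (∫⁻ x in slab k a, ENNReal.ofReal ((x k - b) ^ 2 * f x) =
        ∫⁻ x in slab k a,
          ENNReal.ofReal ((x k - b) ^ 2 * (Icc (b - r) (b + r)).indicator (fun _ => U) (x k)) →
      f =ᵐ[volume.restrict (slab k a)]
        fun x => (Icc (b - r) (b + r)).indicator (fun _ => U) (x k)) := by
  have hk : Measurable fun x : EuclideanSpace ℝ (Fin (n + 1)) => x k := by fun_prop
  have hφm : Measurable fun x : EuclideanSpace ℝ (Fin (n + 1)) => (x k - b) ^ 2 :=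
    (hk.sub_const b).pow_const 2
  have hgm : Measurable fun x : EuclideanSpace ℝ (Fin (n + 1)) =>
      (Icc (b - r) (b + r)).indicator (fun _ => U) (x k) :=
    (measurable_const.indicator measurableSet_Icc).comp hk
  have hφ0 : ∀ᵐ x ∂volume.restrict (slab k a), 0 ≤ (x k - b) ^ 2 := ae_of_all _ fun _ => sq_nonneg _
  have hf0' : ∀ᵐ x ∂volume.restrict (slab k a), 0 ≤ f x :=
    ae_restrict_of_forall_mem (measurableSet_slab k a) hf0
  have hg0 : ∀ᵐ x ∂volume.restrict (slab k a),
      0 ≤ (Icc (b - r) (b + r)).indicator (fun _ => U) (x k) :=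
    ae_of_all _ fun _ => indicator_nonneg (fun _ _ => hU) _
  have hfg : ∀ᵐ x ∂volume.restrict (slab k a),
      0 ≤ ((x k - b) ^ 2 - r ^ 2) * (f x - (Icc (b - r) (b + r)).indicator (fun _ => U) (x k)) :=
    ae_restrict_of_forall_mem (measurableSet_slab k a) fun x hx =>
      sq_sub_sq_mul_sub_indicator_Icc_nonneg b hr U (hf0 x hx) (hfU x hx)
  have hmass' := hmass.trans (setLIntegral_slab_indicator_Icc k b hr).symm
  have hfin : ∫⁻ x in slab k a, ENNReal.ofReal ((Icc (b - r) (b + r)).indicator (fun _ => U) (x k))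
      ≠ ∞ := by
    rw [setLIntegral_slab_indicator_Icc k b hr]
    finiteness
  refine ⟨lintegral_ofReal_mul_le_of_nonneg_sub_mul_sub hφ0 (sq_nonneg r) hf0' hg0 hfg hφm hgm
    hmass' hfin, fun heq => ae_eq_of_lintegral_ofReal_mul_eq hφ0 (sq_nonneg r) hf0' hg0 hfg hφm hf
    hgm (ae_restrict_slab_of_ae k a (ae_sq_sub_ne_sq b r)) hmass' hfin ?_ heq⟩
  rw [setLIntegral_slab_sq_sub_mul_indicator_Icc k b hr]
  finiteness

end SlabBathtub

/-- Slab version of the extremal second-moment bound: for measurable `f : G → [0,U]`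
with mass `E` on the slab `G = {z : |z⁽ⁱ⁾| < a, ∀ i ≥ 2}`, the second moment of the
first coordinate about `b` is at least `E³/(12U²(2a)^{2(d-1)})`, with equality iff
`f = U·1_{G₁}` a.e. on `G`, where `G₁` is the box
`[b - E/(2U(2a)^{d-1}), b + E/(2U(2a)^{d-1})] × (-a,a)^{d-1}`. -/
theorem stmt_12 (d : ℕ) (hd : 0 < d) (a U E b : ℝ) (ha : 0 < a) (hU : 0 < U) (hE : 0 < E)
    (f : EuclideanSpace ℝ (Fin d) → ℝ) (hf : Measurable f)
    (G : Set (EuclideanSpace ℝ (Fin d)))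
    (hG : G = {z : EuclideanSpace ℝ (Fin d) | ∀ i : Fin d, i ≠ ⟨0, hd⟩ → |z i| < a})
    (hf0 : ∀ x ∈ G, 0 ≤ f x) (hfU : ∀ x ∈ G, f x ≤ U)
    (hmass : ∫⁻ x in G, ENNReal.ofReal (f x) ∂volume = ENNReal.ofReal E) :
    ENNReal.ofReal (E ^ 3 / (12 * U ^ 2 * (2 * a) ^ (2 * (d - 1)))) ≤
        ∫⁻ x in G, ENNReal.ofReal ((x ⟨0, hd⟩ - b) ^ 2 * f x) ∂volume ∧
      ((∫⁻ x in G, ENNReal.ofReal ((x ⟨0, hd⟩ - b) ^ 2 * f x) ∂volume)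
            = ENNReal.ofReal (E ^ 3 / (12 * U ^ 2 * (2 * a) ^ (2 * (d - 1)))) ↔
        f =ᵐ[volume.restrict G]
          ({z : EuclideanSpace ℝ (Fin d) |
              z ⟨0, hd⟩ ∈ Set.Icc (b - E / (2 * U * (2 * a) ^ (d - 1)))
                  (b + E / (2 * U * (2 * a) ^ (d - 1))) ∧
              ∀ i : Fin d, i ≠ ⟨0, hd⟩ → |z i| < a}).indicator fun _ => U) := by
  obtain ⟨n, rfl⟩ : ∃ n, d = n + 1 := ⟨d - 1, (Nat.succ_pred_eq_of_pos hd).symm⟩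
  set k : Fin (n + 1) := ⟨0, hd⟩
  set r := E / (2 * U * (2 * a) ^ n) with hr_def
  have hr : 0 ≤ r := by positivity
  replace hG : G = slab k a := hG
  subst hG
  rw [Nat.add_sub_cancel]
  have hE_eq : ENNReal.ofReal E = ENNReal.ofReal (2 * a) ^ n * ENNReal.ofReal (2 * r * U) := by
    rw [← ofReal_pow (by positivity), ← ofReal_mul (by positivity), hr_def]
    congr 1
    field_simp
  have hbound_eq : ENNReal.ofReal (E ^ 3 / (12 * U ^ 2 * (2 * a) ^ (2 * n))) =
      ENNReal.ofReal (2 * a) ^ n * ENNReal.ofReal (2 / 3 * r ^ 3 * U) := by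
    rw [← ofReal_pow (by positivity), ← ofReal_mul (by positivity), hr_def, mul_comm 2 n, pow_mul]
    congr 1
    field_simp
    ring
  have hG1 : ({z : EuclideanSpace ℝ (Fin (n + 1)) | z k ∈ Icc (b - r) (b + r) ∧
      ∀ i, i ≠ k → |z i| < a}).indicator (fun _ => U) =ᵐ[volume.restrict (slab k a)]
      fun x => (Icc (b - r) (b + r)).indicator (fun _ => U) (x k) :=
    ae_restrict_of_forall_mem (measurableSet_slab k a) fun x hx => by
      simp only [indicator_apply, mem_ofPred_eq]
      exact if_congr (and_iff_left hx) rfl rfl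
  obtain ⟨hle, hae⟩ := setLIntegral_slab_sq_sub_mul_bathtub k b hr hU.le hf hf0 hfU
    (hmass.trans hE_eq)
  rw [hbound_eq, ← setLIntegral_slab_sq_sub_mul_indicator_Icc k b hr]
  refine ⟨hle, fun heq => (hae heq).trans hG1.symm, fun hfg => lintegral_congr_ae ?_⟩
  filter_upwards [hfg.trans hG1] with x hx
  rw [hx]
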